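/- With A, B, C traceless real 2×2 matrices, det A = 1, Fl^t = cos t·I + sin t·A, and Q_M(z) = −(1/2)⟨JMz,z⟩: for all z ∈ ℝ², (1/2π)∫₀^{2π} Q_B(Fl^t z) Q_C(Fl^t z) dt = (1/4) Q_{B−ABA}(z) Q_{C−ACA}(z) + (1/8) Q_{B+ABA}(z) Q_{C+ACA}(z) + (1/8) Q_{[B,A]}(z) Q_{[C,A]}(z). -/

import Mathlib

open Real Matrix MeasureTheory intervalIntegral

/-- The quadratic form `Q_M(z) = -(1/2)⟨J M z, z⟩` with `J = [[0,-1],[1,0]]`. -/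
noncomputable def Qform (M : Matrix (Fin 2) (Fin 2) ℝ) (z : Fin 2 → ℝ) : ℝ :=
  -(1 / 2) * (((!![0, -1; 1, 0] : Matrix (Fin 2) (Fin 2) ℝ) * M).mulVec z ⬝ᵥ z)

/-- The 2π-periodic linear flow `Fl^t = cos t · I + sin t · A`. -/
noncomputable def Fl (A : Matrix (Fin 2) (Fin 2) ℝ) (t : ℝ) : Matrix (Fin 2) (Fin 2) ℝ :=
  (Real.cos t) • (1 : Matrix (Fin 2) (Fin 2) ℝ) + (Real.sin t) • A

/-! Pulling `Q_M` back along a `2 × 2` matrix `F` gives `Q_{adj F · M · F}`, since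
`Fᵀ J = J adj F`. For traceless `A` we have `adj Fl^t = Fl^{-t}`, and expanding
`Fl^{-t} M Fl^t` with the double-angle formulas gives
`Q_M ∘ Fl^t = ½ Q_{M - AMA} + ½ cos 2t · Q_{M + AMA} + ½ sin 2t · Q_{MA - AM}`.
The average of a product of two such trigonometric polynomials of degree one in `2t` is
`a₀ b₀ + (a₁ b₁ + a₂ b₂) / 2`, by orthogonality of `1`, `cos 2t`, `sin 2t`. -/

theorem integral_trigPoly_mul_trigPoly {n : ℤ} (hn : n ≠ 0) (a₀ a₁ a₂ b₀ b₁ b₂ : ℝ) :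
    ∫ t in (0 : ℝ)..2 * π,
        (a₀ + a₁ * cos (n * t) + a₂ * sin (n * t)) * (b₀ + b₁ * cos (n * t) + b₂ * sin (n * t))
      = 2 * π * (a₀ * b₀ + (a₁ * b₁ + a₂ * b₂) / 2) := by
  set c₀ := a₀ * b₀ + (a₁ * b₁ + a₂ * b₂) / 2
  set f : ℝ → ℝ := fun u => (a₀ + a₁ * cos u + a₂ * sin u) * (b₀ + b₁ * cos u + b₂ * sin u)
  set G : ℝ → ℝ := fun u => (a₀ * b₁ + a₁ * b₀) * sin u - (a₀ * b₂ + a₂ * b₀) * cos u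
      + ((a₁ * b₁ - a₂ * b₂) * (sin u * cos u) + (a₁ * b₂ + a₂ * b₁) * sin u ^ 2) / 2
  have hG : ∀ u, HasDerivAt G (f u - c₀) u := by
    intro u
    have hs := hasDerivAt_sin u
    have hc := hasDerivAt_cos u
    refine (((hs.const_mul _).sub (hc.const_mul _)).add
      ((((hs.mul hc).const_mul _).add ((hs.pow 2).const_mul _)).div_const 2)).congr_deriv ?_
    linear_combination -(a₁ * b₁ + a₂ * b₂) / 2 * sin_sq_add_cos_sq u
  have hn' : (n : ℝ) ≠ 0 := Int.cast_ne_zero.2 hn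
  have hF : ∀ t, HasDerivAt (fun t => c₀ * t + G (n * t) / n) (f (n * t)) t := by
    intro t
    have hnt : HasDerivAt (fun t : ℝ => (n : ℝ) * t) n t := by
      simpa using (hasDerivAt_id t).const_mul (n : ℝ)
    refine (((hasDerivAt_id t).const_mul c₀).add
      (((hG (n * t)).comp t hnt).div_const (n : ℝ))).congr_deriv ?_
    field_simp
    ring
  rw [integral_eq_sub_of_hasDerivAt (fun t _ => hF t)
    ((by fun_prop : Continuous fun t => f (n * t)).intervalIntegrable _ _)]
  simp only [G, mul_zero, sin_zero, cos_zero, sin_periodic.int_mul_eq n, cos_periodic.int_mul_eq n]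
  ring

local notation "J" => !![0, -1; 1, 0]

theorem transpose_mul_J_eq_J_mul_adjugate {R : Type*} [CommRing R]
    (F : Matrix (Fin 2) (Fin 2) R) : Fᵀ * J = J * adjugate F := by
  rw [adjugate_fin_two, eta_fin_two F]
  ext i j
  fin_cases i <;> fin_cases j <;> simp [Matrix.mul_apply, Fin.sum_univ_two]

section Qform

variable (M N : Matrix (Fin 2) (Fin 2) ℝ) (z : Fin 2 → ℝ)

theorem Qform_add : Qform (M + N) z = Qform M z + Qform N z := by
  simp only [Qform, Matrix.mul_add, add_mulVec, add_dotProduct]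
  ring

theorem Qform_sub : Qform (M - N) z = Qform M z - Qform N z := by
  simp only [Qform, Matrix.mul_sub, sub_mulVec, sub_dotProduct]
  ring

theorem Qform_smul (c : ℝ) : Qform (c • M) z = c * Qform M z := by
  simp only [Qform, Matrix.mul_smul, smul_mulVec, smul_dotProduct, smul_eq_mul]
  ring

theorem Qform_mulVec (F : Matrix (Fin 2) (Fin 2) ℝ) :
    Qform M (F *ᵥ z) = Qform (adjugate F * M * F) z := by
  have h : Fᵀ * (J * M * F) = J * (adjugate F * M * F) := by
    simp only [← Matrix.mul_assoc, transpose_mul_J_eq_J_mul_adjugate]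
  simp only [Qform]
  rw [mulVec_mulVec, dotProduct_mulVec, ← mulVec_transpose, mulVec_mulVec, h]

end Qform

theorem adjugate_Fl {A : Matrix (Fin 2) (Fin 2) ℝ} (hA : A.trace = 0) (t : ℝ) :
    adjugate (Fl A t) = Fl A (-t) := by
  rw [trace_fin_two] at hA
  rw [adjugate_fin_two]
  ext i j
  fin_cases i <;> fin_cases j <;> simp [Fl] <;> linear_combination sin t * hA

theorem Fl_neg_mul_mul_Fl (A M : Matrix (Fin 2) (Fin 2) ℝ) (t : ℝ) :
    Fl A (-t) * M * Fl A t
      = cos t ^ 2 • M + (cos t * sin t) • (M * A - A * M) - sin t ^ 2 • (A * M * A) := by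
  simp only [Fl, cos_neg, sin_neg, add_mul, mul_add, smul_mul_assoc, mul_smul_comm,
    Matrix.one_mul, Matrix.mul_one, neg_smul, neg_mul]
  module

theorem Qform_Fl_mulVec {A : Matrix (Fin 2) (Fin 2) ℝ} (hA : A.trace = 0)
    (M : Matrix (Fin 2) (Fin 2) ℝ) (z : Fin 2 → ℝ) (t : ℝ) :
    Qform M (Fl A t *ᵥ z)
      = Qform (M - A * M * A) z / 2 + Qform (M + A * M * A) z / 2 * cos (2 * t)
        + Qform (M * A - A * M) z / 2 * sin (2 * t) := by
  rw [Qform_mulVec, adjugate_Fl hA, Fl_neg_mul_mul_Fl, cos_two_mul, sin_two_mul]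
  simp only [Qform_add, Qform_sub, Qform_smul]
  linear_combination -Qform (A * M * A) z * sin_sq_add_cos_sq t

theorem average_of_product_of_quadratic_forms_general
    (A B C : Matrix (Fin 2) (Fin 2) ℝ)
    (htrA : A.trace = 0)
    (z : Fin 2 → ℝ) :
    (1 / (2 * π)) * ∫ t in (0:ℝ)..(2 * π),
        Qform B ((Fl A t).mulVec z) * Qform C ((Fl A t).mulVec z)
      = (1 / 4) * Qform (B - A * B * A) z * Qform (C - A * C * A) z
        + (1 / 8) * Qform (B + A * B * A) z * Qform (C + A * C * A) z
        + (1 / 8) * Qform (B * A - A * B) z * Qform (C * A - A * C) z := by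
  have h := integral_trigPoly_mul_trigPoly (n := 2) two_ne_zero
    (Qform (B - A * B * A) z / 2) (Qform (B + A * B * A) z / 2) (Qform (B * A - A * B) z / 2)
    (Qform (C - A * C * A) z / 2) (Qform (C + A * C * A) z / 2) (Qform (C * A - A * C) z / 2)
  push_cast at h
  simp_rw [Qform_Fl_mulVec htrA, h]
  field_simp
  ring

theorem average_of_product_of_quadratic_forms
    (A B C : Matrix (Fin 2) (Fin 2) ℝ)
    (htrA : A.trace = 0) (htrB : B.trace = 0) (htrC : C.trace = 0) (hdet : A.det = 1)
    (z : Fin 2 → ℝ) :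
    (1 / (2 * π)) * ∫ t in (0:ℝ)..(2 * π),
        Qform B ((Fl A t).mulVec z) * Qform C ((Fl A t).mulVec z)
      = (1 / 4) * Qform (B - A * B * A) z * Qform (C - A * C * A) z
        + (1 / 8) * Qform (B + A * B * A) z * Qform (C + A * C * A) z
        + (1 / 8) * Qform (B * A - A * B) z * Qform (C * A - A * C) z :=
  average_of_product_of_quadratic_forms_general A B C htrA z
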